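/- Let (G,e,H,f) satisfy: G, H connected loopless multigraphs, φ: u_i ↦ v_i an isomorphism G\e → H\f, and ψ an isomorphism G/e → H/f. Let C: π(1) → π(2) → ⋯ → π(k) → π(1) be a directed cycle in the digraph D_ψ (defined from ψ as in the construction), and let W be a multigraph with vertices w_1,…,w_k forming a vertex orbit of an automorphism ξ with ξ(w_j) = w_{j+1} (indices mod k). Let G' be obtained from G and W by identifying u_{π(j)} with w_j for all j ∈ [k], and H' from H and W by identifying v_{π(j)} with w_j for all j ∈ [k]. Then G'\e ≅ H'\f and G'/e ≅ H'/f; in particular G' and H' have equal Tutte polynomials. -/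

import Mathlib

/-! Gluing commutes with deleting or contracting an edge of `G`: `G' \ e` is `(G \ e) ⊔ W` glued
at the same vertices, and `G' / e` is `(G / e) ⊔ W` glued at the images of those vertices.
The isomorphism `σ : G \ e ≅ H \ f` fixes the attachment points, so it glues with the identity
of `W` to `G' \ e ≅ H' \ f`. The isomorphism `ψ : G / e ≅ H / f` moves the `j`-th attachment
point to the `(j+1)`-st, since `π` is a directed cycle of `D_ψ`; the automorphism `ξ` rotates
the `w_j` in the same way, so `ψ` and `ξ` glue to `G' / e ≅ H' / f`. As the `w_j` are distinct,
`e` and `f` stay non-loops in `G'` and `H'`, and deletion–contraction gives equal Tutte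
polynomials. -/

open scoped BigOperators
open MvPolynomial

attribute [local instance] Classical.propDecidable

/-- A multigraph: finite vertex and edge types, each edge has an unordered
pair of endpoints (loops and parallel edges allowed). -/
structure Multigraph where
  V : Type
  E : Type
  [fintypeV : Fintype V]
  [fintypeE : Fintype E]
  [decEqV : DecidableEq V]
  [decEqE : DecidableEq E]
  ends : E → Sym2 V

attribute [instance] Multigraph.fintypeV Multigraph.fintypeE
  Multigraph.decEqV Multigraph.decEqE

noncomputable instance quotSetoidFintype {α : Type} [Fintype α] (s : Setoid α) :
    Fintype (Quotient s) := by classical exact Quotient.fintype s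

noncomputable instance connCompFintype {α : Type} [Fintype α] (G : SimpleGraph α) :
    Fintype G.ConnectedComponent := by
  classical exact Fintype.ofSurjective G.connectedComponentMk fun c => c.exists_rep

namespace Multigraph

variable (G : Multigraph)

/-- The simple graph induced by a set of edges `A` (parallel edges and loops
do not affect connectivity). -/
def spanning (A : Finset G.E) : SimpleGraph G.V :=
  SimpleGraph.fromRel (fun a b => ∃ e ∈ A, G.ends e = s(a, b))

/-- number of connected components of the spanning subgraph `(V, A)` -/
noncomputable def comps (A : Finset G.E) : ℕ :=
  Nat.card (G.spanning A).ConnectedComponent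

/-- rank of an edge subset: `|V| - c(A)` -/
noncomputable def rk (A : Finset G.E) : ℕ :=
  Fintype.card G.V - G.comps A

/-- The Tutte polynomial, as a polynomial in the variables `X 0 = x`, `X 1 = y`. -/
noncomputable def tutte : MvPolynomial (Fin 2) ℤ :=
  ∑ A : Finset G.E,
    (X 0 - 1) ^ (G.rk Finset.univ - G.rk A) * (X 1 - 1) ^ (A.card - G.rk A)

def Connected : Prop := (G.spanning Finset.univ).Connected

def IsLoop (e : G.E) : Prop := (G.ends e).IsDiag

def IsBridge (e : G.E) : Prop :=
  G.comps (Finset.univ.erase e) ≠ G.comps Finset.univ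

noncomputable def numLoops : ℕ := Nat.card {e : G.E // (G.ends e).IsDiag}

/-- delete a set of edges -/
def deleteSet (F : Finset G.E) : Multigraph where
  V := G.V
  E := {e : G.E // e ∉ F}
  ends := fun e => G.ends e.1

/-- delete one edge -/
def delete (e : G.E) : Multigraph := G.deleteSet {e}

/-- identify vertices along (the equivalence generated by) a relation `r` -/
noncomputable def identify (r : G.V → G.V → Prop) : Multigraph where
  V := Quotient (Relation.EqvGen.setoid r)
  E := G.E
  decEqV := Classical.decEq _
  ends := fun e => (G.ends e).map (Quotient.mk (Relation.EqvGen.setoid r))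

/-- contract an edge: delete it and identify its two endpoints -/
noncomputable def contract (e : G.E) : Multigraph :=
  (G.delete e).identify (fun a b => a ∈ G.ends e ∧ b ∈ G.ends e)

/-- the projection of a vertex of `G` to a vertex of `G/e` -/
noncomputable def cmk (e : G.E) : G.V → (G.contract e).V := fun v => Quotient.mk _ v

/-- restrict to the edges satisfying `P` (all vertices are kept) -/
noncomputable def edgeRestrict (P : G.E → Prop) : Multigraph where
  V := G.V
  E := {e : G.E // P e}
  ends := fun e => G.ends e.1

/-- add new edges indexed by `n` with prescribed endpoints -/
def addEdges (n : Type) [Fintype n] [DecidableEq n] (f : n → Sym2 G.V) :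
    Multigraph where
  V := G.V
  E := G.E ⊕ n
  ends := Sum.elim G.ends f

/-- disjoint union -/
def disjUnion (H : Multigraph) : Multigraph where
  V := G.V ⊕ H.V
  E := G.E ⊕ H.E
  ends := Sum.elim (fun e => (G.ends e).map Sum.inl) (fun e => (H.ends e).map Sum.inr)

/-- the gluing `G(u_1,…,u_k) ⊔ H(w_1,…,w_k)`: disjoint union with `u i`
identified with `w i` for each `i` -/
noncomputable def glue (H : Multigraph) {k : ℕ} (u : Fin k → G.V) (w : Fin k → H.V) :
    Multigraph :=
  (G.disjUnion H).identify
    (fun a b => ∃ i : Fin k, a = Sum.inl (u i) ∧ b = Sum.inr (w i))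

/-- projection from `G.V ⊕ H.V` to the vertices of the gluing -/
noncomputable def glueMk (H : Multigraph) {k : ℕ} (u : Fin k → G.V) (w : Fin k → H.V) :
    G.V ⊕ H.V → (G.glue H u w).V := fun a => Quotient.mk _ a

end Multigraph

/-- `σ` is an isomorphism of multigraphs: a vertex bijection preserving
edge multiplicities between every pair of vertices. -/
def Multigraph.IsIsoMap (G H : Multigraph) (σ : G.V ≃ H.V) : Prop :=
  ∀ p : Sym2 G.V,
    Nat.card {e : G.E // G.ends e = p} = Nat.card {e : H.E // H.ends e = p.map σ}

/-- `G` and `H` are isomorphic multigraphs -/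
def Multigraph.Iso (G H : Multigraph) : Prop := ∃ σ : G.V ≃ H.V, G.IsIsoMap H σ

/-- `σ` is an automorphism of `G` -/
def Multigraph.IsAuto (G : Multigraph) (σ : G.V ≃ G.V) : Prop := G.IsIsoMap G σ

/-- `Q` is a partition of the type `α` -/
def IsPartitionUniv {α : Type} (Q : Finset (Finset α)) : Prop :=
  (∀ B ∈ Q, B.Nonempty) ∧ ∀ i : α, ∃! B, B ∈ Q ∧ i ∈ B

namespace Relation

variable {α β : Type*} {r : α → α → Prop}

theorem EqvGen.map {r' : β → β → Prop} (f : α → β) (h : ∀ a b, r a b → r' (f a) (f b))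
    {a b : α} (hab : EqvGen r a b) : EqvGen r' (f a) (f b) := by
  induction hab with
  | rel x y hxy => exact .rel _ _ (h _ _ hxy)
  | refl x => exact .refl _
  | symm x y _ ih => exact .symm _ _ ih
  | trans x y z _ _ ih₁ ih₂ => exact .trans _ _ _ ih₁ ih₂

theorem EqvGen.apply_eq (f : α → β) (h : ∀ a b, r a b → f a = f b) {a b : α}
    (hab : EqvGen r a b) : f a = f b :=
  (Equivalence.eqvGen_iff eq_equivalence).mp (hab.map f h)

end Relation

theorem Sym2.map_equiv_eq_iff {α β : Type*} (σ : α ≃ β) (p : Sym2 α) (q : Sym2 β) :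
    p.map σ = q ↔ p = q.map σ.symm := by
  constructor
  · rintro rfl
    simp [Sym2.map_map]
  · rintro rfl
    simp [Sym2.map_map]

def Equiv.subtypeSumNotInl {α β : Type*} (a : α) :
    {z : α ⊕ β // z ∉ ({Sum.inl a} : Finset (α ⊕ β))} ≃
      {x : α // x ∉ ({a} : Finset α)} ⊕ β :=
  Equiv.subtypeSum.trans <| Equiv.sumCongr (Equiv.subtypeEquivRight fun x => by simp)
    (Equiv.subtypeUnivEquiv fun x => by simp)

theorem Finset.sum_powerset_map_univ {ι α M : Type*} [Fintype ι] [AddCommMonoid M]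
    (f : ι ↪ α) (F : Finset α → M) :
    ∑ t ∈ (Finset.univ.map f).powerset, F t = ∑ B : Finset ι, F (B.map f) := by
  have h : (Finset.univ.map f).powerset = Finset.univ.image (Finset.map f) := by
    ext t
    simp [Finset.subset_map_iff, eq_comm]
  rw [h, Finset.sum_image fun _ _ _ _ h => Finset.map_injective f h]

namespace SimpleGraph

variable {V V' : Type*} {Γ : SimpleGraph V} {Δ : SimpleGraph V'}

theorem Reachable.map_of_adj {f : V → V'} (hf : ∀ a b, Γ.Adj a b → Δ.Reachable (f a) (f b))
    {a b : V} (h : Γ.Reachable a b) : Δ.Reachable (f a) (f b) := by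
  rw [reachable_iff_reflTransGen] at h ⊢
  exact Relation.ReflTransGen.lift' f
    (fun a b hab => (reachable_iff_reflTransGen _ _).1 (hf a b hab)) _ _ h

theorem card_connectedComponent_eq_of_surjective {f : V → V'} (hf : Function.Surjective f)
    (hfib : ∀ a b, f a = f b → Γ.Reachable a b)
    (hadj : ∀ a b, Γ.Adj a b → Δ.Reachable (f a) (f b))
    (hlift : ∀ a b, Δ.Adj (f a) (f b) → Γ.Reachable a b) :
    Nat.card Γ.ConnectedComponent = Nat.card Δ.ConnectedComponent := by
  have hg (x : V') : f (Function.surjInv hf x) = x := Function.surjInv_eq hf x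
  refine Nat.card_congr
    { toFun := ConnectedComponent.lift (fun a => Δ.connectedComponentMk (f a))
        fun a b p _ => ConnectedComponent.sound (Reachable.map_of_adj hadj ⟨p⟩)
      invFun := ConnectedComponent.lift (fun x => Γ.connectedComponentMk (Function.surjInv hf x))
        fun x y p _ => ConnectedComponent.sound <| Reachable.map_of_adj
          (fun x y hxy => hlift _ _ (by rwa [hg, hg])) ⟨p⟩
      left_inv := fun c => c.ind fun a => ConnectedComponent.sound (hfib _ _ (hg (f a)))
      right_inv := fun c => c.ind fun x => congrArg Δ.connectedComponentMk (hg x) }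

end SimpleGraph

namespace Multigraph

open Relation

section Iso

variable {G H K W W' : Multigraph}

theorem isIsoMap_iff (σ : G.V ≃ H.V) :
    G.IsIsoMap H σ ↔ ∃ θ : G.E ≃ H.E, ∀ a, H.ends (θ a) = (G.ends a).map σ := by
  constructor
  · intro hσ
    have hfib (c : Sym2 H.V) : {a // (G.ends a).map σ = c} ≃ {b // H.ends b = c} := by
      refine (Equiv.subtypeEquivRight fun a => Sym2.map_equiv_eq_iff σ _ _).trans
        (Fintype.equivOfCardEq ?_)
      have := hσ (c.map σ.symm)
      simp only [Nat.card_eq_fintype_card, Sym2.map_map, Equiv.self_comp_symm,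
        Sym2.map_id] at this
      simpa using this
    exact ⟨Equiv.ofFiberEquiv hfib, Equiv.ofFiberEquiv_map hfib⟩
  · rintro ⟨θ, hθ⟩ p
    refine Nat.card_congr (θ.subtypeEquiv fun a => ?_)
    rw [hθ, (Sym2.map.injective σ.injective).eq_iff]

theorem IsIsoMap.refl (G : Multigraph) : G.IsIsoMap G (Equiv.refl G.V) :=
  (isIsoMap_iff _).2 ⟨Equiv.refl _, fun a => by simp⟩

theorem Iso.symm (h : G.Iso H) : H.Iso G := by
  obtain ⟨σ, hσ⟩ := h
  obtain ⟨θ, hθ⟩ := (isIsoMap_iff σ).1 hσ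
  refine ⟨σ.symm, (isIsoMap_iff _).2 ⟨θ.symm, fun b => ?_⟩⟩
  rw [← Sym2.map_equiv_eq_iff, ← hθ, Equiv.apply_symm_apply]

theorem Iso.trans (h₁ : G.Iso H) (h₂ : H.Iso K) : G.Iso K := by
  obtain ⟨σ₁, hσ₁⟩ := h₁
  obtain ⟨σ₂, hσ₂⟩ := h₂
  obtain ⟨θ₁, hθ₁⟩ := (isIsoMap_iff σ₁).1 hσ₁
  obtain ⟨θ₂, hθ₂⟩ := (isIsoMap_iff σ₂).1 hσ₂
  refine ⟨σ₁.trans σ₂, (isIsoMap_iff _).2 ⟨θ₁.trans θ₂, fun a => ?_⟩⟩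
  simp only [Equiv.trans_apply, hθ₂, hθ₁, Sym2.map_map]
  rfl

theorem IsIsoMap.disjUnion {σ : G.V ≃ H.V} {ξ : W.V ≃ W'.V} (hσ : G.IsIsoMap H σ)
    (hξ : W.IsIsoMap W' ξ) : (G.disjUnion W).IsIsoMap (H.disjUnion W') (σ.sumCongr ξ) := by
  obtain ⟨θ, hθ⟩ := (isIsoMap_iff σ).1 hσ
  obtain ⟨θ', hθ'⟩ := (isIsoMap_iff ξ).1 hξ
  refine (isIsoMap_iff _).2 ⟨θ.sumCongr θ', ?_⟩
  rintro (a | b)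
  · change (H.ends (θ a)).map Sum.inl =
      ((G.ends a).map Sum.inl).map (σ.sumCongr ξ : G.V ⊕ W.V → H.V ⊕ W'.V)
    rw [hθ, Sym2.map_map, Sym2.map_map]
    rfl
  · change (W'.ends (θ' b)).map Sum.inr =
      ((W.ends b).map Sum.inr).map (σ.sumCongr ξ : G.V ⊕ W.V → H.V ⊕ W'.V)
    rw [hθ', Sym2.map_map, Sym2.map_map]
    rfl

theorem IsIsoMap.identify {σ : G.V ≃ H.V} (hσ : G.IsIsoMap H σ) {r : G.V → G.V → Prop}
    {r' : H.V → H.V → Prop} (hr : ∀ a b, r a b ↔ r' (σ a) (σ b)) :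
    (G.identify r).Iso (H.identify r') := by
  obtain ⟨θ, hθ⟩ := (isIsoMap_iff σ).1 hσ
  have hgen (a b : G.V) : EqvGen r a b ↔ EqvGen r' (σ a) (σ b) := by
    refine ⟨EqvGen.map σ fun a b => (hr a b).1, fun h => ?_⟩
    simpa using h.map σ.symm fun a b hab => (hr _ _).2 (by simpa using hab)
  refine ⟨Quotient.congr σ hgen, (isIsoMap_iff _).2 ⟨θ, fun (a : G.E) => ?_⟩⟩
  change (H.ends (θ a)).map (Quotient.mk _) = ((G.ends a).map (Quotient.mk _)).map
    (Quotient.congr σ hgen : Quotient (EqvGen.setoid r) → Quotient (EqvGen.setoid r'))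
  rw [hθ, Sym2.map_map, Sym2.map_map]
  rfl

/-- The relabelling `ρ` of the attachment points is what lets a rotation of `W` absorb a
cyclic shift of the attachment points of `G`. -/
theorem IsIsoMap.glue {k : ℕ} {u : Fin k → G.V} {v : Fin k → H.V} {w : Fin k → W.V}
    {w' : Fin k → W'.V} {σ : G.V ≃ H.V} {ξ : W.V ≃ W'.V} (hσ : G.IsIsoMap H σ)
    (hξ : W.IsIsoMap W' ξ) (ρ : Equiv.Perm (Fin k)) (hu : ∀ i, σ (u i) = v (ρ i))
    (hw : ∀ i, ξ (w i) = w' (ρ i)) : (G.glue W u w).Iso (H.glue W' v w') := by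
  refine (hσ.disjUnion hξ).identify fun (a b : G.V ⊕ W.V) => ⟨?_, ?_⟩
  · rintro ⟨i, rfl, rfl⟩
    exact ⟨ρ i, (by simp [hu] : σ.sumCongr ξ (Sum.inl (u i)) = Sum.inl (v (ρ i))),
      (by simp [hw] : σ.sumCongr ξ (Sum.inr (w i)) = Sum.inr (w' (ρ i)))⟩
  · rintro ⟨j, ha, hb⟩
    have hu' : σ.sumCongr ξ (Sum.inl (u (ρ.symm j))) = Sum.inl (v j) := by simp [hu]
    have hw' : σ.sumCongr ξ (Sum.inr (w (ρ.symm j))) = Sum.inr (w' j) := by simp [hw]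
    exact ⟨ρ.symm j, (σ.sumCongr ξ).injective (ha.trans hu'.symm),
      (σ.sumCongr ξ).injective (hb.trans hw'.symm)⟩

end Iso

section Glue

variable (G W : Multigraph) {k : ℕ} (u : Fin k → G.V) (w : Fin k → W.V) {β : Type*}

noncomputable def contractLift (e : G.E) (f : G.V → β)
    (hf : ∀ x y, x ∈ G.ends e → y ∈ G.ends e → f x = f y) : (G.contract e).V → β :=
  Quotient.lift f fun _ _ h => EqvGen.apply_eq f (fun x y hxy => hf x y hxy.1 hxy.2) h

noncomputable def glueLift (f : G.V ⊕ W.V → β)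
    (hf : ∀ i, f (Sum.inl (u i)) = f (Sum.inr (w i))) : (G.glue W u w).V → β :=
  Quotient.lift f fun _ _ h => EqvGen.apply_eq f (by rintro _ _ ⟨i, rfl, rfl⟩; exact hf i) h

theorem cmk_eq_of_mem {e : G.E} {x y : G.V} (hx : x ∈ G.ends e) (hy : y ∈ G.ends e) :
    G.cmk e x = G.cmk e y :=
  Quotient.sound (EqvGen.rel _ _ ⟨hx, hy⟩)

theorem glueMk_inl_eq_inr (i : Fin k) :
    G.glueMk W u w (Sum.inl (u i)) = G.glueMk W u w (Sum.inr (w i)) :=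
  Quotient.sound (EqvGen.rel _ _ ⟨i, rfl, rfl⟩)

theorem glue_ends_inl (a : G.E) :
    (G.glue W u w).ends (Sum.inl a) = (G.ends a).map (G.glueMk W u w ∘ Sum.inl) :=
  Sym2.map_map _

variable {w} in
theorem glueMk_inl_injective (hw : Function.Injective w) :
    Function.Injective (G.glueMk W u w ∘ Sum.inl) := by
  let retract := G.glueLift W u w (Sum.elim Sum.inl (Function.extend w (Sum.inl ∘ u) Sum.inr))
    fun i => (hw.extend_apply (Sum.inl ∘ u) Sum.inr i).symm
  exact fun x y hxy => Sum.inl_injective (congrArg retract hxy)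

variable {w} in
theorem not_isLoop_glue_inl (hw : Function.Injective w) {e : G.E}
    (he : ¬G.IsLoop e) : ¬(G.glue W u w).IsLoop (Sum.inl e) := by
  unfold IsLoop at he ⊢
  rwa [glue_ends_inl, Sym2.isDiag_map (G.glueMk_inl_injective W u hw)]

theorem glue_delete_iso (e : G.E) :
    ((G.glue W u w).delete (Sum.inl e)).Iso ((G.delete e).glue W u w) :=
  ⟨Equiv.refl _, (isIsoMap_iff _).2 ⟨Equiv.subtypeSumNotInl e, by
    rintro ⟨a | b, h⟩ <;> exact (congrFun Sym2.map_id _).symm⟩⟩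

/-- Both sides are quotients of `G.V ⊕ W.V`, by the relation generated by the gluing and by
the ends of `e`, taken in opposite orders. -/
noncomputable def glueContractVEquiv (e : G.E) :
    ((G.glue W u w).contract (Sum.inl e)).V ≃
      ((G.contract e).glue W (fun j => G.cmk e (u j)) w).V where
  toFun := (G.glue W u w).contractLift (Sum.inl e)
    (G.glueLift W u w
      ((G.contract e).glueMk W (fun j => G.cmk e (u j)) w ∘ Sum.map (G.cmk e) id)
      fun i => (G.contract e).glueMk_inl_eq_inr W (fun j => G.cmk e (u j)) w i)
    (by
      intro x y hx hy
      rw [glue_ends_inl, Sym2.mem_map] at hx hy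
      obtain ⟨x, hx, rfl⟩ := hx
      obtain ⟨y, hy, rfl⟩ := hy
      exact congrArg (fun c => (G.contract e).glueMk W (fun j => G.cmk e (u j)) w (Sum.inl c))
        (G.cmk_eq_of_mem hx hy))
  invFun := (G.contract e).glueLift W (fun j => G.cmk e (u j)) w
    (Sum.elim
      (G.contractLift e ((G.glue W u w).cmk (Sum.inl e) ∘ G.glueMk W u w ∘ Sum.inl)
        fun x y hx hy => (G.glue W u w).cmk_eq_of_mem
          (by rw [glue_ends_inl]; exact Sym2.mem_map.2 ⟨x, hx, rfl⟩)
          (by rw [glue_ends_inl]; exact Sym2.mem_map.2 ⟨y, hy, rfl⟩))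
      ((G.glue W u w).cmk (Sum.inl e) ∘ G.glueMk W u w ∘ Sum.inr))
    fun i => congrArg ((G.glue W u w).cmk (Sum.inl e)) (G.glueMk_inl_eq_inr W u w i)
  left_inv := by
    refine Quotient.ind (Quotient.ind ?_)
    rintro (x | y) <;> rfl
  right_inv := by
    refine Quotient.ind ?_
    rintro (c | y)
    · induction c using Quotient.ind
      rfl
    · rfl

theorem glue_contract_iso (e : G.E) :
    ((G.glue W u w).contract (Sum.inl e)).Iso
      ((G.contract e).glue W (fun j => G.cmk e (u j)) w) := by
  refine ⟨glueContractVEquiv G W u w e, (isIsoMap_iff _).2 ⟨Equiv.subtypeSumNotInl e, ?_⟩⟩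
  rintro ⟨a | b, h⟩
  · change (((G.ends a).map (G.cmk e)).map Sum.inl).map (Quotient.mk _) =
      ((((G.ends a).map Sum.inl).map (Quotient.mk _)).map (Quotient.mk _)).map
        (glueContractVEquiv G W u w e)
    induction G.ends a using Sym2.ind
    rfl
  · change ((W.ends b).map Sum.inr).map (Quotient.mk _) =
      ((((W.ends b).map Sum.inr).map (Quotient.mk _)).map (Quotient.mk _)).map
        (glueContractVEquiv G W u w e)
    induction W.ends b using Sym2.ind
    rfl

end Glue

section Rank

variable {G H : Multigraph} {e : G.E}

theorem spanning_adj {A : Finset G.E} {a b : G.V} :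
    (G.spanning A).Adj a b ↔ a ≠ b ∧ ∃ x ∈ A, G.ends x = s(a, b) := by
  simp only [spanning, SimpleGraph.fromRel_adj, Sym2.eq_swap (a := b), or_self]

theorem reachable_of_mem_ends {A : Finset G.E} {x : G.E} (hx : x ∈ A) {a b : G.V}
    (ha : a ∈ G.ends x) (hb : b ∈ G.ends x) : (G.spanning A).Reachable a b := by
  obtain rfl | hab := eq_or_ne a b
  · rfl
  · exact (spanning_adj.2 ⟨hab, x, hx, ((Sym2.mem_and_mem_iff hab).1 ⟨ha, hb⟩)⟩).reachable

theorem comps_le_card (A : Finset G.E) : G.comps A ≤ Fintype.card G.V :=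
  Nat.card_eq_fintype_card (α := G.V) ▸
    Nat.card_le_card_of_surjective _ fun c => c.exists_rep

theorem comps_map {σ : G.V ≃ H.V} {θ : G.E ↪ H.E}
    (hθ : ∀ a, H.ends (θ a) = (G.ends a).map σ) (A : Finset G.E) :
    H.comps (A.map θ) = G.comps A := by
  refine (Nat.card_congr (SimpleGraph.Iso.connectedComponentEquiv ⟨σ, fun {a b} => ?_⟩)).symm
  simp only [spanning_adj, Finset.mem_map, ne_eq, EmbeddingLike.apply_eq_iff_eq,
    exists_exists_and_eq_and, hθ, ← Sym2.map_mk, (Sym2.map.injective σ.injective).eq_iff]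

theorem rk_map {σ : G.V ≃ H.V} {θ : G.E ↪ H.E}
    (hθ : ∀ a, H.ends (θ a) = (G.ends a).map σ) (A : Finset G.E) :
    H.rk (A.map θ) = G.rk A := by
  rw [rk, rk, comps_map hθ, Fintype.card_congr σ]

variable (G e) in
def deleteEmb : (G.delete e).E ↪ G.E := Function.Embedding.subtype _

-- The map of `deleteEmb`, typed by the edges of `G / e` so that rewrites match syntactically.
variable (G e) in
def contractEmb : (G.contract e).E ↪ G.E := G.deleteEmb e

theorem map_univ_deleteEmb : Finset.univ.map (G.deleteEmb e) = Finset.univ.erase e := by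
  ext x
  rw [Finset.mem_erase, Finset.mem_map]
  constructor
  · rintro ⟨y, -, rfl⟩
    exact ⟨fun h => y.2 (Finset.mem_singleton.2 h), Finset.mem_univ _⟩
  · exact fun ⟨hx, _⟩ => ⟨⟨x, by simpa⟩, Finset.mem_univ _, rfl⟩

theorem map_univ_contractEmb : Finset.univ.map (G.contractEmb e) = Finset.univ.erase e :=
  map_univ_deleteEmb

theorem rk_map_deleteEmb (B : Finset (G.delete e).E) :
    G.rk (B.map (G.deleteEmb e)) = (G.delete e).rk B :=
  rk_map (G := G.delete e) (H := G) (σ := Equiv.refl _) (θ := G.deleteEmb e)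
    (fun _ => (congrFun Sym2.map_id _).symm) B

theorem cmk_surjective : Function.Surjective (G.cmk e) :=
  Quotient.mk_surjective

theorem comps_insert_contract (B : Finset (G.contract e).E) :
    G.comps (insert e (B.map (G.contractEmb e))) = (G.contract e).comps B := by
  set A := insert e (B.map (G.contractEmb e))
  have hfib (a b : G.V) (hab : G.cmk e a = G.cmk e b) : (G.spanning A).Reachable a b :=
    (SimpleGraph.reachable_is_equivalence _).eqvGen_iff.1 <|
      (Quotient.exact hab).mono fun x y hxy =>
        reachable_of_mem_ends (Finset.mem_insert_self e _) hxy.1 hxy.2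
  refine SimpleGraph.card_connectedComponent_eq_of_surjective cmk_surjective hfib ?_ ?_
  · intro a b hab
    obtain ⟨-, x, hx, hxab⟩ := spanning_adj.1 hab
    rcases Finset.mem_insert.1 hx with rfl | hx
    · rw [G.cmk_eq_of_mem (hxab ▸ Sym2.mem_mk_left a b) (hxab ▸ Sym2.mem_mk_right a b)]
    · obtain ⟨z, hz, rfl⟩ := Finset.mem_map.1 hx
      have hends : (G.contract e).ends z = s(G.cmk e a, G.cmk e b) := by
        change (G.ends z.1).map (G.cmk e) = _
        rw [show G.ends z.1 = s(a, b) from hxab]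
        rfl
      exact reachable_of_mem_ends hz (hends ▸ Sym2.mem_mk_left _ _)
        (hends ▸ Sym2.mem_mk_right _ _)
  · intro a b hab
    obtain ⟨-, z, hz, hzab⟩ := spanning_adj.1 hab
    change (G.ends z.1).map (G.cmk e) = _ at hzab
    obtain ⟨a', ha', hqa⟩ := Sym2.mem_map.1 (hzab ▸ Sym2.mem_mk_left _ _)
    obtain ⟨b', hb', hqb⟩ := Sym2.mem_map.1 (hzab ▸ Sym2.mem_mk_right _ _)
    have hzA : G.contractEmb e z ∈ A := Finset.mem_insert_of_mem (Finset.mem_map_of_mem _ hz)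
    exact ((hfib _ _ hqa.symm).trans (reachable_of_mem_ends hzA ha' hb')).trans (hfib _ _ hqb)

theorem card_contract_add_one (he : ¬G.IsLoop e) :
    Fintype.card (G.contract e).V + 1 = Fintype.card G.V := by
  induction hxy : G.ends e using Sym2.ind with | _ x y => ?_
  have hne : x ≠ y := by rwa [IsLoop, hxy, Sym2.mk_isDiag_iff] at he
  -- `G / e` is `G.V` with `y` merged into `x`
  let collapse : G.V → G.V := fun v => if v = y then x else v
  have hcollapse {a b : G.V} (hab : G.cmk e a = G.cmk e b) : collapse a = collapse b := by
    refine (Quotient.exact hab).apply_eq collapse fun a b hab => ?_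
    have ha : a = x ∨ a = y := Sym2.mem_iff.1 (hxy ▸ hab.1 : a ∈ s(x, y))
    have hb : b = x ∨ b = y := Sym2.mem_iff.1 (hxy ▸ hab.2 : b ∈ s(x, y))
    rcases ha with rfl | rfl <;> rcases hb with rfl | rfl <;> simp [collapse]
  have hbij : Function.Bijective fun v : {v // v ≠ y} => G.cmk e v := by
    refine ⟨fun a b hab => Subtype.ext ?_, fun c => ?_⟩
    · simpa [collapse, a.2, b.2] using hcollapse hab
    · obtain ⟨v, rfl⟩ := cmk_surjective c
      by_cases hv : v = y
      · subst hv
        exact ⟨⟨x, hne⟩,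
          G.cmk_eq_of_mem (hxy ▸ Sym2.mem_mk_left _ _) (hxy ▸ Sym2.mem_mk_right _ _)⟩
      · exact ⟨⟨v, hv⟩, rfl⟩
  have hpos : 0 < Fintype.card G.V := Fintype.card_pos_iff.2 ⟨y⟩
  rw [← Fintype.card_of_bijective hbij, Fintype.card_subtype_compl, Fintype.card_subtype_eq]
  omega

theorem rk_insert_contract (he : ¬G.IsLoop e) (B : Finset (G.contract e).E) :
    G.rk (insert e (B.map (G.contractEmb e))) = (G.contract e).rk B + 1 := by
  have := (G.contract e).comps_le_card B
  unfold rk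
  rw [comps_insert_contract, ← card_contract_add_one he]
  omega

theorem rk_univ_eq_contract (he : ¬G.IsLoop e) :
    G.rk Finset.univ = (G.contract e).rk Finset.univ + 1 := by
  rw [← rk_insert_contract he, map_univ_contractEmb, Finset.insert_erase (Finset.mem_univ e)]

end Rank

section Tutte

open MvPolynomial

variable {G H : Multigraph} {e : G.E}

/-- Keeping the outer rank `r` fixed lets the Tutte sum of `G` split into the sums of
`G \ e` and `G / e` (`rankGenPoly_eq_delete_add_contract`). -/
noncomputable def rankGenPoly (G : Multigraph) (r : ℕ) : MvPolynomial (Fin 2) ℤ :=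
  ∑ A : Finset G.E, (X 0 - 1) ^ (r - G.rk A) * (X 1 - 1) ^ (A.card - G.rk A)

theorem tutte_eq_rankGenPoly (G : Multigraph) : G.tutte = G.rankGenPoly (G.rk Finset.univ) :=
  rfl

theorem rankGenPoly_eq_delete_add_contract (he : ¬G.IsLoop e) (r : ℕ) :
    G.rankGenPoly r = (G.delete e).rankGenPoly r + (G.contract e).rankGenPoly (r - 1) := by
  rw [rankGenPoly, ← Finset.powerset_univ, ← Finset.insert_erase (Finset.mem_univ e),
    Finset.sum_powerset_insert (Finset.notMem_erase e _)]
  congr 1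
  · rw [← map_univ_deleteEmb, Finset.sum_powerset_map_univ]
    refine Fintype.sum_congr _ _ fun B => ?_
    rw [rk_map_deleteEmb, Finset.card_map]
  · rw [← map_univ_contractEmb, Finset.sum_powerset_map_univ]
    refine Fintype.sum_congr _ _ fun B => ?_
    have he' : e ∉ B.map (G.contractEmb e) := fun h => by
      obtain ⟨z, -, hz⟩ := Finset.mem_map.1 h
      exact z.2 (Finset.mem_singleton.2 hz)
    rw [rk_insert_contract he, Finset.card_insert_of_notMem he', Finset.card_map]
    congr 2 <;> omega

theorem Iso.rankGenPoly_eq (h : G.Iso H) (r : ℕ) : G.rankGenPoly r = H.rankGenPoly r := by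
  obtain ⟨σ, hσ⟩ := h
  obtain ⟨θ, hθ⟩ := (isIsoMap_iff σ).1 hσ
  refine Fintype.sum_equiv θ.finsetCongr _ _ fun A => ?_
  rw [Equiv.finsetCongr_apply, rk_map (θ := θ.toEmbedding) hθ, Finset.card_map]

theorem Iso.rk_univ_eq (h : G.Iso H) : G.rk Finset.univ = H.rk Finset.univ := by
  obtain ⟨σ, hσ⟩ := h
  obtain ⟨θ, hθ⟩ := (isIsoMap_iff σ).1 hσ
  rw [← rk_map (θ := θ.toEmbedding) hθ, Finset.map_univ_equiv]

theorem tutte_eq_of_iso_delete_of_iso_contract {f : H.E} (he : ¬G.IsLoop e)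
    (hf : ¬H.IsLoop f) (hd : (G.delete e).Iso (H.delete f))
    (hc : (G.contract e).Iso (H.contract f)) : G.tutte = H.tutte := by
  have hrk : G.rk Finset.univ = H.rk Finset.univ := by
    rw [rk_univ_eq_contract he, rk_univ_eq_contract hf, hc.rk_univ_eq]
  rw [tutte_eq_rankGenPoly, tutte_eq_rankGenPoly, rankGenPoly_eq_delete_add_contract he,
    rankGenPoly_eq_delete_add_contract hf, hd.rankGenPoly_eq, hc.rankGenPoly_eq, hrk]

end Tutte

end Multigraph

/-- `hcyc` says that `π` runs along a directed cycle of `D_ψ`: an arc `i → j` of `D_ψ` means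
that `ψ` sends the image of `u i` in `G/e` to the image of `v j` in `H/f`. -/
theorem stmt_14_general (G H : Multigraph) {n : ℕ}
    (hGl : ∀ e : G.E, ¬ G.IsLoop e) (hHl : ∀ f : H.E, ¬ H.IsLoop f)
    (u : Fin n → G.V) (v : Fin n → H.V)
    (e : G.E) (f : H.E)
    (σ : G.V ≃ H.V) (hσu : ∀ i, σ (u i) = v i)
    (hσ : Multigraph.IsIsoMap (G.delete e) (H.delete f) σ)
    (ψ : (G.contract e).V ≃ (H.contract f).V)
    (hψ : Multigraph.IsIsoMap (G.contract e) (H.contract f) ψ)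
    {k : ℕ} [NeZero k] (π : Fin k → Fin n)
    (hcyc : ∀ l : Fin k, ψ (G.cmk e (u (π l))) = H.cmk f (v (π (l + 1))))
    (W : Multigraph) (w : Fin k → W.V) (hw : Function.Injective w)
    (ξ : W.V ≃ W.V) (hξ : W.IsAuto ξ) (hξw : ∀ j : Fin k, ξ (w j) = w (j + 1)) :
    Multigraph.Iso ((G.glue W (fun j => u (π j)) w).delete (Sum.inl e))
        ((H.glue W (fun j => v (π j)) w).delete (Sum.inl f)) ∧
      Multigraph.Iso ((G.glue W (fun j => u (π j)) w).contract (Sum.inl e))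
        ((H.glue W (fun j => v (π j)) w).contract (Sum.inl f)) ∧
      (G.glue W (fun j => u (π j)) w).tutte = (H.glue W (fun j => v (π j)) w).tutte := by
  have hdelete := (Multigraph.glue_delete_iso G W _ w e).trans <|
    (Multigraph.IsIsoMap.glue (G := G.delete e) (H := H.delete f) (u := fun j => u (π j))
      (v := fun j => v (π j)) hσ (.refl W) (Equiv.refl _) (fun i => hσu (π i))
      fun _ => rfl).trans (Multigraph.glue_delete_iso H W _ w f).symm
  have hcontract := (Multigraph.glue_contract_iso G W _ w e).trans <|
    (hψ.glue hξ (Equiv.addRight 1) (v := fun j => H.cmk f (v (π j))) hcyc hξw).trans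
      (Multigraph.glue_contract_iso H W _ w f).symm
  exact ⟨hdelete, hcontract, Multigraph.tutte_eq_of_iso_delete_of_iso_contract
    (Multigraph.not_isLoop_glue_inl G W _ hw (hGl e))
    (Multigraph.not_isLoop_glue_inl H W _ hw (hHl f)) hdelete hcontract⟩

/-- gluing a rotationally symmetric gadget `W` along a directed
cycle of `D_ψ` produces a new quadruple with isomorphic deletions and
contractions, hence equal Tutte polynomials.  An arc `i → j` of `D_ψ` means
that `ψ` sends the image of `u i` in `G/e` to the image of `v j` in `H/f`. -/
theorem stmt_14 (G H : Multigraph) {n : ℕ}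
    (hGc : G.Connected) (hHc : H.Connected)
    (hGl : ∀ e : G.E, ¬ G.IsLoop e) (hHl : ∀ f : H.E, ¬ H.IsLoop f)
    (u : Fin n → G.V) (v : Fin n → H.V)
    (hu : Function.Bijective u) (hv : Function.Bijective v)
    (e : G.E) (f : H.E) (s1 s2 t1 t2 : Fin n) (hs : s1 ≠ s2) (ht : t1 ≠ t2)
    (he : G.ends e = s(u s1, u s2)) (hf : H.ends f = s(v t1, v t2))
    (σ : G.V ≃ H.V) (hσu : ∀ i, σ (u i) = v i)
    (hσ : Multigraph.IsIsoMap (G.delete e) (H.delete f) σ)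
    (ψ : (G.contract e).V ≃ (H.contract f).V)
    (hψ : Multigraph.IsIsoMap (G.contract e) (H.contract f) ψ)
    {k : ℕ} [NeZero k] (π : Fin k → Fin n) (hπ : Function.Injective π)
    (hcyc : ∀ l : Fin k, ψ (G.cmk e (u (π l))) = H.cmk f (v (π (l + 1))))
    (W : Multigraph) (w : Fin k → W.V) (hw : Function.Injective w)
    (ξ : W.V ≃ W.V) (hξ : W.IsAuto ξ) (hξw : ∀ j : Fin k, ξ (w j) = w (j + 1)) :
    Multigraph.Iso ((G.glue W (fun j => u (π j)) w).delete (Sum.inl e))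
        ((H.glue W (fun j => v (π j)) w).delete (Sum.inl f)) ∧
      Multigraph.Iso ((G.glue W (fun j => u (π j)) w).contract (Sum.inl e))
        ((H.glue W (fun j => v (π j)) w).contract (Sum.inl f)) ∧
      (G.glue W (fun j => u (π j)) w).tutte = (H.glue W (fun j => v (π j)) w).tutte :=
  stmt_14_general G H hGl hHl u v e f σ hσu hσ ψ hψ π hcyc W w hw ξ hξ hξw
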